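/- Let F be a finite field with q = |F| elements and K a finite field extension of F. Let f₁, ..., f_k ∈ K[X] be nonzero linearized polynomials. For each i, let b_i be a nonzero linearized polynomial right-divisible by f_j for every j ≠ i, and suppose there are linearized polynomials S_{1,i}, S_{2,i} with S_{1,i} ∘ b_i + S_{2,i} ∘ f_i = X. Let h be a nonzero linearized polynomial such that every f_i right-divides h and every linearized polynomial right-divisible by all the f_i is right-divisible by h (h is a left least common multiple of f₁, ..., f_k). Let g ∈ K[X] be linearized, let π_i(g) be the right remainder of g by f_i, and set G = Σ_{i=1}^{k} π_i(g) ∘ S_{1,i} ∘ b_i. Then h right-divides g − G; in particular, if deg g < deg h, then the right remainder of G under right division by h equals g. -/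

import Mathlib

open Polynomial

/-- A polynomial over `K` is linearized (a `q`-polynomial) if every exponent in
its support is a power of `q`. -/
def IsLinearized (q : ℕ) {K : Type*} [Semiring K] (p : K[X]) : Prop :=
  ∀ n ∈ p.support, ∃ i : ℕ, n = q ^ i

/-- `B` right-divides `A` (among linearized polynomials): `A = Q ∘ B` for some
linearized `Q`. -/
def LinRightDvd (q : ℕ) {K : Type*} [CommSemiring K] (B A : K[X]) : Prop :=
  ∃ Q : K[X], IsLinearized q Q ∧ A = Q.comp B

section Aux

variable {K : Type*} [Field K] {q : ℕ}

lemma lin_add {a b : K[X]} (ha : IsLinearized q a) (hb : IsLinearized q b) :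
    IsLinearized q (a + b) := by
  intro n hn
  rcases Finset.mem_union.1 (Polynomial.support_add hn) with h | h
  · exact ha n h
  · exact hb n h

lemma lin_neg {a : K[X]} (ha : IsLinearized q a) : IsLinearized q (-a) := by
  intro n hn
  exact ha n (by rwa [Polynomial.support_neg] at hn)

lemma lin_sub {a b : K[X]} (ha : IsLinearized q a) (hb : IsLinearized q b) :
    IsLinearized q (a - b) := by
  rw [sub_eq_add_neg]; exact lin_add ha (lin_neg hb)

lemma lin_zero : IsLinearized q (0 : K[X]) := by
  intro n hn; simp at hn

lemma lin_finsum {ι : Type*} (s : Finset ι) (f : ι → K[X])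
    (hf : ∀ i ∈ s, IsLinearized q (f i)) : IsLinearized q (∑ i ∈ s, f i) := by
  classical
  induction s using Finset.induction_on with
  | empty => simpa using (lin_zero (K := K) (q := q))
  | insert _ _ hni ih =>
    rw [Finset.sum_insert hni]
    exact lin_add (hf _ (Finset.mem_insert_self _ _))
      (ih fun i hi => hf i (Finset.mem_insert_of_mem hi))

lemma lin_C_mul (a : K) {p : K[X]} (hp : IsLinearized q p) :
    IsLinearized q (C a * p) := by
  intro n hn
  rw [← Polynomial.smul_eq_C_mul] at hn
  exact hp n (Polynomial.support_smul a p hn)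

variable {p m : ℕ} [hp : Fact p.Prime] [CharP K p]

lemma support_pow_char {g : K[X]} {n : ℕ} (hn : n ∈ (g ^ p).support) :
    ∃ n' ∈ g.support, n = p * n' := by
  rw [← Polynomial.map_frobenius_expand (p := p) g] at hn
  have hn' := Polynomial.support_map_subset _ _ hn
  rw [Polynomial.mem_support_iff, Polynomial.coeff_expand hp.out.pos] at hn'
  by_cases hd : p ∣ n
  · refine ⟨n / p, ?_, (Nat.mul_div_cancel' hd).symm⟩
    rw [Polynomial.mem_support_iff]
    simpa [hd] using hn'
  · simp [hd] at hn'

lemma support_pow_char_pow {g : K[X]} (e : ℕ) {n : ℕ} (hn : n ∈ (g ^ p ^ e).support) :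
    ∃ n' ∈ g.support, n = p ^ e * n' := by
  induction e generalizing n with
  | zero => exact ⟨n, by simpa using hn, by simp⟩
  | succ e ih =>
    rw [pow_succ, pow_mul] at hn
    obtain ⟨n', hn', rfl⟩ := support_pow_char hn
    obtain ⟨n'', hn'', rfl⟩ := ih hn'
    exact ⟨n'', hn'', by ring⟩

lemma lin_pow_q (hq : q = p ^ m) {M : K[X]} (hM : IsLinearized q M) (i : ℕ) :
    IsLinearized q (M ^ q ^ i) := by
  intro n hn
  rw [hq, ← pow_mul] at hn
  obtain ⟨n', hn', rfl⟩ := support_pow_char_pow (m * i) hn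
  obtain ⟨j, rfl⟩ := hM n' hn'
  exact ⟨i + j, by rw [hq]; ring⟩

lemma lin_comp (hq : q = p ^ m) {L M : K[X]} (hL : IsLinearized q L)
    (hM : IsLinearized q M) : IsLinearized q (L.comp M) := by
  rw [Polynomial.comp, Polynomial.eval₂_eq_sum, Polynomial.sum_def]
  refine lin_finsum _ _ fun n hn => ?_
  obtain ⟨i, rfl⟩ := hL n hn
  exact lin_C_mul _ (lin_pow_q hq hM i)

lemma lin_comp_add (hq : q = p ^ m) {L : K[X]} (hL : IsLinearized q L)
    (A B : K[X]) : L.comp (A + B) = L.comp A + L.comp B := by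
  rw [Polynomial.comp, Polynomial.comp, Polynomial.comp, Polynomial.eval₂_eq_sum,
    Polynomial.eval₂_eq_sum, Polynomial.eval₂_eq_sum, Polynomial.sum_def,
    Polynomial.sum_def, Polynomial.sum_def, ← Finset.sum_add_distrib]
  refine Finset.sum_congr rfl fun n hn => ?_
  obtain ⟨i, rfl⟩ := hL n hn
  rw [hq, ← pow_mul, add_pow_char_pow, mul_add]

lemma lin_comp_sub (hq : q = p ^ m) {L : K[X]} (hL : IsLinearized q L)
    (A B : K[X]) : L.comp (A - B) = L.comp A - L.comp B := by
  have := lin_comp_add hq hL (A - B) B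
  rw [sub_add_cancel] at this
  exact (eq_sub_of_add_eq this.symm)

lemma rdvd_add {f A B : K[X]} (hA : LinRightDvd q f A) (hB : LinRightDvd q f B) :
    LinRightDvd q f (A + B) := by
  obtain ⟨QA, hQA, rfl⟩ := hA
  obtain ⟨QB, hQB, rfl⟩ := hB
  exact ⟨QA + QB, lin_add hQA hQB, (Polynomial.add_comp).symm⟩

lemma rdvd_sub {f A B : K[X]} (hA : LinRightDvd q f A) (hB : LinRightDvd q f B) :
    LinRightDvd q f (A - B) := by
  obtain ⟨QA, hQA, rfl⟩ := hA
  obtain ⟨QB, hQB, rfl⟩ := hB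
  exact ⟨QA - QB, lin_sub hQA hQB, (Polynomial.sub_comp).symm⟩

lemma rdvd_sum {ι : Type*} {f : K[X]} (s : Finset ι) (A : ι → K[X])
    (hA : ∀ i ∈ s, LinRightDvd q f (A i)) : LinRightDvd q f (∑ i ∈ s, A i) := by
  classical
  induction s using Finset.induction_on with
  | empty => exact ⟨0, lin_zero, by simp⟩
  | insert _ _ hni ih =>
    rw [Finset.sum_insert hni]
    exact rdvd_add (hA _ (Finset.mem_insert_self _ _))
      (ih fun i hi => hA i (Finset.mem_insert_of_mem hi))

lemma rdvd_comp (hq : q = p ^ m) {f L A : K[X]} (hL : IsLinearized q L)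
    (hA : LinRightDvd q f A) : LinRightDvd q f (L.comp A) := by
  obtain ⟨Q, hQ, rfl⟩ := hA
  exact ⟨L.comp Q, lin_comp hq hL hQ, (Polynomial.comp_assoc _ _ _).symm⟩

end Aux

/-- Linearized Chinese Remainder Theorem, direct form: with
`G = Σ_i π_i(g) ∘ S_{1,i} ∘ b_i`, the left lcm `h` of the moduli right-divides
`g - G`; in particular if `deg g < deg h` then the right remainder of `G` by
`h` equals `g`. -/
theorem crt_direct_form (F K : Type*) [Field F] [Fintype F]
    [Field K] [Fintype K] [Algebra F K]
    (q : ℕ) (hq : q = Fintype.card F) (k : ℕ)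
    (f b S₁ S₂ π : Fin k → K[X]) (h g : K[X])
    (hf : ∀ i, IsLinearized q (f i)) (hf0 : ∀ i, f i ≠ 0)
    (hb : ∀ i, IsLinearized q (b i)) (hb0 : ∀ i, b i ≠ 0)
    (hbdvd : ∀ i j, j ≠ i → LinRightDvd q (f j) (b i))
    (hS₁ : ∀ i, IsLinearized q (S₁ i)) (hS₂ : ∀ i, IsLinearized q (S₂ i))
    (hBez : ∀ i, (S₁ i).comp (b i) + (S₂ i).comp (f i) = X)
    (hh : IsLinearized q h) (hh0 : h ≠ 0)
    (hhdvd : ∀ i, LinRightDvd q (f i) h)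
    (hhlcm : ∀ p : K[X], IsLinearized q p →
      (∀ i, LinRightDvd q (f i) p) → LinRightDvd q h p)
    (hg : IsLinearized q g)
    (hπ : ∀ i, IsLinearized q (π i) ∧
      (∃ Q : K[X], IsLinearized q Q ∧ g = Q.comp (f i) + π i) ∧
      (π i).degree < (f i).degree) :
    LinRightDvd q h (g - ∑ i, (π i).comp ((S₁ i).comp (b i))) ∧
    (g.degree < h.degree →
      ∃ Q : K[X], IsLinearized q Q ∧
        ∑ i, (π i).comp ((S₁ i).comp (b i)) = Q.comp h + g) := by
  classical
  -- set up the characteristic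
  set p : ℕ := ringChar F with hpdef
  obtain ⟨m, hpprime, hcard⟩ := FiniteField.card F p
  haveI : Fact p.Prime := ⟨hpprime⟩
  haveI : CharP K p := charP_of_injective_algebraMap (algebraMap F K).injective p
  have hqpm : q = p ^ (m : ℕ) := by rw [hq, hcard]
  set G : K[X] := ∑ i, (π i).comp ((S₁ i).comp (b i)) with hG
  -- G is linearized
  have hGlin : IsLinearized q G :=
    lin_finsum _ _ fun i _ =>
      lin_comp hqpm (hπ i).1 (lin_comp hqpm (hS₁ i) (hb i))
  -- f i right-divides g - G for each i
  have hdvd : ∀ i, LinRightDvd q (f i) (g - G) := by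
    intro i
    obtain ⟨hπlin, ⟨Qg, hQg, hgeq⟩, _⟩ := hπ i
    have hTi : (π i).comp ((S₁ i).comp (b i))
        = π i - ((π i).comp (S₂ i)).comp (f i) := by
      have hB : (S₁ i).comp (b i) = X - (S₂ i).comp (f i) :=
        eq_sub_of_add_eq (hBez i)
      rw [hB, lin_comp_sub hqpm hπlin, Polynomial.comp_X, Polynomial.comp_assoc]
    have hGsplit : G = (π i).comp ((S₁ i).comp (b i)) +
        ∑ j ∈ Finset.univ.erase i, (π j).comp ((S₁ j).comp (b j)) :=
      (Finset.add_sum_erase _ _ (Finset.mem_univ i)).symm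
    have key : g - G = (Qg.comp (f i) + ((π i).comp (S₂ i)).comp (f i)) -
        ∑ j ∈ Finset.univ.erase i, (π j).comp ((S₁ j).comp (b j)) := by
      rw [hGsplit, hTi, hgeq]; ring
    rw [key]
    refine rdvd_sub (rdvd_add ⟨Qg, hQg, rfl⟩
      ⟨(π i).comp (S₂ i), lin_comp hqpm hπlin (hS₂ i), rfl⟩)
      (rdvd_sum _ _ fun j hj => ?_)
    have hji : j ≠ i := (Finset.mem_erase.1 hj).1
    have hbj : LinRightDvd q (f i) (b j) := hbdvd j i hji.symm
    exact rdvd_comp hqpm (hπ j).1 (rdvd_comp hqpm (hS₁ j) hbj)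
  -- conclude
  have hmain : LinRightDvd q h (g - G) := hhlcm _ (lin_sub hg hGlin) hdvd
  refine ⟨hmain, fun _ => ?_⟩
  obtain ⟨Q, hQ, hQeq⟩ := hmain
  exact ⟨-Q, lin_neg hQ, by rw [Polynomial.neg_comp, ← hQeq]; ring⟩
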